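/- Let 𝒜 = ℂ[E₁,E₂,A₀,A₁] with the derivation f as above and v = A₀ − (1/2)E₁A₁. If m ≥ n ≥ 0 are natural numbers with m − n even, then f^{m−n+1}(A₁^m·v^n) = 0. -/

import Mathlib

/-!
Write `E₁ = a + b`, `E₂ = ab`. This substitution is injective and turns `f` into a derivation
with `a ↦ a²`, `b ↦ b²`. Since `f A₁ = -½E₁A₁` and `f v = ½E₁v`, the element `w = A₁^m vⁿ`
with `m = n + 2k` satisfies `f w = -kE₁w`, hence `f^r w = T^r(1) w` for `T = f - kE₁`. Now
`T(aⁱbʲ) = (i - k)aⁱ⁺¹bʲ + (j - k)aⁱbʲ⁺¹`, so `T^r 1` is a combination of monomials `aⁱbʲ` with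
`i + j = r` and `i, j ≤ k`, of which there are none when `r = 2k + 1`.
-/

open MvPolynomial

def boundedMonomials {A : Type*} [CommRing A] (a b : A) (k r : ℕ) : Set A :=
  {x | ∃ i j, i ≤ k ∧ j ≤ k ∧ i + j = r ∧ x = a ^ i * b ^ j}

namespace Derivation

variable {R A : Type*} [CommRing R] [CommRing A] [Algebra R A] (D : Derivation R A A)

theorem apply_pow_of_apply_eq_mul {x c : A} (hx : D x = c * x) (n : ℕ) :
    D (x ^ n) = n * c * x ^ n := by
  rw [leibniz_pow, hx, smul_eq_mul, nsmul_eq_mul]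
  rcases n with _ | n
  · simp
  · rw [Nat.add_sub_cancel, pow_succ]; ring

theorem apply_pow_mul_pow {x y c d : A} (hx : D x = c * x) (hy : D y = d * y) (m n : ℕ) :
    D (x ^ m * y ^ n) = (m * c + n * d) * (x ^ m * y ^ n) := by
  rw [leibniz, apply_pow_of_apply_eq_mul D hx, apply_pow_of_apply_eq_mul D hy, smul_eq_mul,
    smul_eq_mul]
  ring

theorem pow_apply_mul_of_apply_eq_mul {w c : A} (hw : D w = c * w) (r : ℕ) (p : A) :
    (D.toLinearMap ^ r) (p * w) = ((D.toLinearMap + LinearMap.mulLeft R c) ^ r) p * w := by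
  induction r generalizing p with
  | zero => rfl
  | succ r ih =>
    rw [pow_succ, Module.End.mul_apply, pow_succ, Module.End.mul_apply, ← ih]
    congr 1
    simp only [coeFn_coe, leibniz, hw, smul_eq_mul, LinearMap.add_apply, LinearMap.mulLeft_apply]
    ring

theorem map_pow_apply_of_semiconj {B : Type*} [CommRing B] [Algebra R B] (φ : A →ₐ[R] B)
    (D' : Derivation R B B) (h : Function.Semiconj φ D D') (r : ℕ) (p : A) :
    φ ((D.toLinearMap ^ r) p) = (D'.toLinearMap ^ r) (φ p) := by
  simpa only [Module.End.pow_apply, coeFn_coe] using h.iterate_right r p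

section Riccati

variable {a b : A}

theorem pow_apply_one_mem_span (ha : D a = a * a) (hb : D b = b * b) (k r : ℕ) :
    ((D.toLinearMap + LinearMap.mulLeft R (-(k * (a + b)))) ^ r) 1 ∈
      Submodule.span ℤ (boundedMonomials a b k r) := by
  set T := D.toLinearMap + LinearMap.mulLeft R (-(k * (a + b)))
  induction r with
  | zero => exact Submodule.subset_span ⟨0, 0, by simp, by simp, rfl, by simp⟩
  | succ r ih =>
    rw [pow_succ', Module.End.mul_apply]
    have coeff_mem : ∀ {i : ℕ} {x : A}, i ≤ k → (i < k → x ∈ boundedMonomials a b k (r + 1)) →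
        ((i : ℤ) - k) • x ∈ Submodule.span ℤ (boundedMonomials a b k (r + 1)) := by
      intro i x hik hx
      rcases hik.lt_or_eq with hlt | rfl
      · exact Submodule.smul_mem _ _ (Submodule.subset_span (hx hlt))
      · simp
    refine Submodule.span_induction (p := fun x _ => T x ∈ _) ?_ ?_ ?_ ?_ ih
    · rintro _ ⟨i, j, hi, hj, rfl, rfl⟩
      have hT : T (a ^ i * b ^ j) =
          ((i : ℤ) - k) • (a ^ (i + 1) * b ^ j) + ((j : ℤ) - k) • (a ^ i * b ^ (j + 1)) := by
        simp only [T, LinearMap.add_apply, coeFn_coe, LinearMap.mulLeft_apply,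
          apply_pow_mul_pow D ha hb, zsmul_eq_mul]
        push_cast; ring
      rw [hT]
      exact add_mem (coeff_mem hi fun h => ⟨i + 1, j, h, hj, by omega, rfl⟩)
        (coeff_mem hj fun h => ⟨i, j + 1, hi, h, by omega, rfl⟩)
    · simp
    · intro x y _ _ hx hy; rw [map_add]; exact add_mem hx hy
    · intro n x _ hx; rw [map_zsmul]; exact Submodule.smul_mem _ n hx

theorem pow_apply_one_eq_zero (ha : D a = a * a) (hb : D b = b * b) (k : ℕ) :
    ((D.toLinearMap + LinearMap.mulLeft R (-(k * (a + b)))) ^ (2 * k + 1)) 1 = 0 := by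
  have hempty : boundedMonomials a b k (2 * k + 1) = ∅ := by
    ext x
    simp only [boundedMonomials, Set.mem_ofPred_eq, Set.mem_empty_iff_false, iff_false]
    omega
  simpa [hempty] using pow_apply_one_mem_span D ha hb k (2 * k + 1)

end Riccati

end Derivation

namespace MvPolynomial

theorem semiconj_derivation_of_X {σ R B : Type*} [CommRing R] [CommRing B] [Algebra R B]
    (φ : MvPolynomial σ R →ₐ[R] B) (D : Derivation R (MvPolynomial σ R) (MvPolynomial σ R))
    (D' : Derivation R B B) (h : ∀ i, φ (D (X i)) = D' (φ (X i))) :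
    Function.Semiconj φ D D' := by
  intro p
  induction p using MvPolynomial.induction_on with
  | C a => rw [← algebraMap_eq, D.map_algebraMap, map_zero, AlgHom.commutes, D'.map_algebraMap]
  | add p q hp hq => simp only [map_add, hp, hq]
  | mul_X p i hp => simp only [Derivation.leibniz, smul_eq_mul, map_add, map_mul, hp, h]

theorem bind₁_injective_of_surjective_eval {σ τ K : Type*} [Field K] [Infinite K]
    (g : σ → MvPolynomial τ K) (h : Function.Surjective fun y i => eval y (g i)) :
    Function.Injective (bind₁ g) := by
  refine (injective_iff_map_eq_zero _).mpr fun p hp => MvPolynomial.funext fun x => ?_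
  obtain ⟨y, rfl⟩ := h x
  have := eval₂Hom_bind₁ (RingHom.id K) y g p
  rw [hp, map_zero] at this
  exact this.symm

end MvPolynomial

/-- `E₁ ↦ a + b`, `E₂ ↦ ab` with `a = X 0`, `b = X 1`; `A₀ = X 2` and `A₁ = X 3` are fixed. -/
noncomputable def splitRoots : MvPolynomial (Fin 4) ℂ →ₐ[ℂ] MvPolynomial (Fin 4) ℂ :=
  bind₁ ![X 0 + X 1, X 0 * X 1, X 2, X 3]

noncomputable def splitDerivation :
    Derivation ℂ (MvPolynomial (Fin 4) ℂ) (MvPolynomial (Fin 4) ℂ) :=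
  mkDerivation ℂ ![X 0 ^ 2, X 1 ^ 2, (1 / 2 : ℂ) • ((X 0 + X 1) * X 2) - X 0 * X 1 * X 3,
    -((1 / 2 : ℂ) • ((X 0 + X 1) * X 3))]

theorem splitDerivation_X_zero : splitDerivation (X 0) = X 0 * X 0 := by
  simp [splitDerivation, mkDerivation_X, sq]

theorem splitDerivation_X_one : splitDerivation (X 1) = X 1 * X 1 := by
  simp [splitDerivation, mkDerivation_X, sq]

theorem splitRoots_injective : Function.Injective splitRoots := by
  refine bind₁_injective_of_surjective_eval _ fun x => ?_
  obtain ⟨z, hz⟩ := IsAlgClosed.exists_pow_nat_eq (x 0 ^ 2 - 4 * x 1) two_pos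
  refine ⟨![(x 0 + z) / 2, (x 0 - z) / 2, x 2, x 3], funext fun i => ?_⟩
  fin_cases i <;> simp
  · ring
  · linear_combination (-1 / 4 : ℂ) * hz

theorem splitRoots_semiconj (f : Derivation ℂ (MvPolynomial (Fin 4) ℂ) (MvPolynomial (Fin 4) ℂ))
    (hf1 : f (X 0) = X 0 ^ 2 - 2 * X 1) (hf2 : f (X 1) = X 0 * X 1)
    (hf3 : f (X 2) = (1 / 2 : ℂ) • (X 0 * X 2) - X 1 * X 3)
    (hf4 : f (X 3) = -((1 / 2 : ℂ) • (X 0 * X 3))) :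
    Function.Semiconj splitRoots f splitDerivation := by
  refine semiconj_derivation_of_X _ _ _ fun i => ?_
  fin_cases i <;>
    simp [splitRoots, splitDerivation, mkDerivation_X, Derivation.leibniz, hf1, hf2, hf3, hf4,
      map_ofNat] <;>
    ring

theorem apply_X_three_pow_mul_pow
    (f : Derivation ℂ (MvPolynomial (Fin 4) ℂ) (MvPolynomial (Fin 4) ℂ))
    (hf1 : f (X 0) = X 0 ^ 2 - 2 * X 1)
    (hf3 : f (X 2) = (1 / 2 : ℂ) • (X 0 * X 2) - X 1 * X 3)
    (hf4 : f (X 3) = -((1 / 2 : ℂ) • (X 0 * X 3))) (m n : ℕ) :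
    f (X 3 ^ m * (X 2 - (1 / 2 : ℂ) • (X 0 * X 3)) ^ n) =
      C (((n : ℂ) - m) / 2) * X 0 * (X 3 ^ m * (X 2 - (1 / 2 : ℂ) • (X 0 * X 3)) ^ n) := by
  have half : (C (1 / 2) : MvPolynomial (Fin 4) ℂ) * 2 = 1 := by
    rw [← map_ofNat C 2, ← map_mul]; norm_num
  have hA₁ : f (X 3) = C (-1 / 2) * X 0 * X 3 := by
    rw [hf4, smul_eq_C_mul, ← neg_mul, ← map_neg]; ring_nf
  have hv : f (X 2 - (1 / 2 : ℂ) • (X 0 * X 3)) =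
      C (1 / 2) * X 0 * (X 2 - (1 / 2 : ℂ) • (X 0 * X 3)) := by
    rw [map_sub, Derivation.map_smul, Derivation.leibniz, hf1, hf3, hf4]
    simp only [smul_eq_C_mul, smul_eq_mul]
    linear_combination (X 1 * X 3 + C (1 / 2) * X 0 ^ 2 * X 3) * half
  have hc : (C (((n : ℂ) - m) / 2) : MvPolynomial (Fin 4) ℂ) =
      (m : MvPolynomial (Fin 4) ℂ) * C (-1 / 2) + (n : MvPolynomial (Fin 4) ℂ) * C (1 / 2) := by
    rw [← map_natCast C, ← map_natCast C, ← map_mul, ← map_mul, ← map_add]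
    ring_nf
  rw [f.apply_pow_mul_pow hA₁ hv, hc]
  ring

theorem f_iterate_kills_A1m_vn
    (f : Derivation ℂ (MvPolynomial (Fin 4) ℂ) (MvPolynomial (Fin 4) ℂ))
    (hf1 : f (X 0) = X 0 ^ 2 - 2 * X 1) (hf2 : f (X 1) = X 0 * X 1)
    (hf3 : f (X 2) = (1 / 2 : ℂ) • (X 0 * X 2) - X 1 * X 3)
    (hf4 : f (X 3) = -((1 / 2 : ℂ) • (X 0 * X 3)))
    (v : MvPolynomial (Fin 4) ℂ) (hv : v = X 2 - (1 / 2 : ℂ) • (X 0 * X 3))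
    (m n : ℕ) (hmn : n ≤ m) (heven : Even (m - n)) :
    (f.toLinearMap ^ (m - n + 1)) (X 3 ^ m * v ^ n) = 0 := by
  obtain ⟨k, hk⟩ := heven
  have hsemi := splitRoots_semiconj f hf1 hf2 hf3 hf4
  have hw : splitDerivation (splitRoots (X 3 ^ m * v ^ n)) =
      -((k : MvPolynomial (Fin 4) ℂ) * (X 0 + X 1)) * splitRoots (X 3 ^ m * v ^ n) := by
    have hk' : ((n : ℂ) - m) / 2 = -k := by
      rw [show m = n + 2 * k by omega]; push_cast; ring
    rw [← hsemi, hv, apply_X_three_pow_mul_pow f hf1 hf3 hf4, hk']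
    simp [splitRoots]
  apply splitRoots_injective
  rw [map_zero, f.map_pow_apply_of_semiconj _ _ hsemi, ← one_mul (splitRoots _),
    splitDerivation.pow_apply_mul_of_apply_eq_mul hw, show m - n + 1 = 2 * k + 1 by omega,
    splitDerivation.pow_apply_one_eq_zero splitDerivation_X_zero splitDerivation_X_one, zero_mul]
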